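/- arXiv:2404.13407 — 2 statements merged into one kernel-verified Lean document; each statement's English description precedes it below -/
import Mathlib

section
/- From (ε,δ)-location privacy to (ε,δ,θ)-trajectory privacy (Theorem 2): Let L be a nonempty finite set (the possible locations at timestep t) and let L* ⊆ L be such that L \ L* is nonempty. Let p : L → ℝ be a nonnegative prior with ∑_{l∈L} p(l) = 1 and ∑_{l∈L*} p(l) = δ, where 0 < δ ≤ 1. Let ε ≥ 0 and let q : L → ℝ be a nonnegative posterior satisfying q(l) = 0 for l ∈ L \ L* and q(l) ≤ δ⁻¹·e^ε·p(l) for l ∈ L* (i.e. the mechanism satisfies (ε,δ)-location privacy). Let w : L → ℝ be a nonnegative function (w(l) = Pr[l ↝ T] is the adversary's belief that location l is reached via the fixed trajectory T). Then ∑_{l∈L} q(l)·w(l) ≤ δ⁻¹·e^ε·∑_{l∈L} p(l)·w(l) + θ, where θ = (δ − 1)·min_{l∈L\L*} w(l). That is, the posterior probability that T is the true trajectory, given that the true location lies in L*, is at most δ⁻¹·e^ε times its prior probability plus θ. -/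
/-- Theorem 2 (from (ε,δ)-location privacy to (ε,δ,θ)-trajectory privacy).
`L` is the nonempty finite set of possible locations, `Lstar ⊆ L` a
δ-obfuscation set with nonempty complement, `p` the prior (a probability mass
function on `L` with `∑ l ∈ Lstar, p l = δ`), `q` the posterior satisfying
(ε,δ)-location privacy, and `w l = Pr[l ↝ T]` the adversary's belief that
location `l` is reached via the fixed trajectory `T`.  Then the posterior
probability of `T`, namely `∑ l ∈ L, q l * w l`, is at most
`δ⁻¹ * exp ε` times its prior probability `∑ l ∈ L, p l * w l`
plus `θ = (δ - 1) * min_{l ∈ L \ Lstar} w l`. -/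
theorem trajectory_privacy_from_location_privacy
    {α : Type*} [DecidableEq α] (L Lstar : Finset α) (hsub : Lstar ⊆ L)
    (hLne : L.Nonempty) (hdiff : (L \ Lstar).Nonempty)
    (p q w : α → ℝ) (δ ε : ℝ)
    (hδpos : 0 < δ) (hδle : δ ≤ 1) (hε : 0 ≤ ε)
    (hp : ∀ l ∈ L, 0 ≤ p l)
    (hpsum : ∑ l ∈ L, p l = 1)
    (hδ : ∑ l ∈ Lstar, p l = δ)
    (hq : ∀ l ∈ L, 0 ≤ q l)
    (hqout : ∀ l ∈ L \ Lstar, q l = 0)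
    (hqin : ∀ l ∈ Lstar, q l ≤ δ⁻¹ * Real.exp ε * p l)
    (hw : ∀ l ∈ L, 0 ≤ w l) :
    (∑ l ∈ L, q l * w l) ≤
      δ⁻¹ * Real.exp ε * (∑ l ∈ L, p l * w l) +
        (δ - 1) * (L \ Lstar).inf' hdiff w := by
  set m := (L \ Lstar).inf' hdiff w with hm
  have hc : 1 ≤ δ⁻¹ * Real.exp ε := by
    nlinarith [mul_inv_cancel₀ (ne_of_gt hδpos), Real.one_le_exp hε,
      inv_pos.mpr hδpos]
  have hm0 : 0 ≤ m := by
    apply Finset.le_inf'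
    intro l hl
    exact hw l (Finset.mem_sdiff.mp hl).1
  have hsdiff_p : ∑ l ∈ L \ Lstar, p l = 1 - δ := by
    have h := Finset.sum_sdiff (f := p) hsub
    linarith [h.symm ▸ hpsum]
  have hlow : m * (1 - δ) ≤ ∑ l ∈ L \ Lstar, p l * w l := by
    rw [← hsdiff_p, Finset.mul_sum]
    apply Finset.sum_le_sum
    intro l hl
    have h1 : m ≤ w l := Finset.inf'_le w hl
    have h2 := hp l (Finset.mem_sdiff.mp hl).1
    nlinarith
  have hq_split : ∑ l ∈ L, q l * w l = ∑ l ∈ Lstar, q l * w l := by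
    rw [← Finset.sum_sdiff hsub]
    have hz : ∑ l ∈ L \ Lstar, q l * w l = 0 :=
      Finset.sum_eq_zero (fun l hl => by rw [hqout l hl]; ring)
    linarith
  have hstar : ∑ l ∈ Lstar, q l * w l ≤
      δ⁻¹ * Real.exp ε * ∑ l ∈ Lstar, p l * w l := by
    rw [Finset.mul_sum]
    apply Finset.sum_le_sum
    intro l hl
    have h1 := hqin l hl
    have h2 := hw l (hsub hl)
    nlinarith
  have hLsplit : ∑ l ∈ L, p l * w l =
      ∑ l ∈ L \ Lstar, p l * w l + ∑ l ∈ Lstar, p l * w l :=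
    (Finset.sum_sdiff hsub).symm
  rw [hq_split, hLsplit]
  have hdpos : 0 ≤ m * (1 - δ) := by nlinarith
  nlinarith [Finset.sum_nonneg (fun l hl =>
    mul_nonneg (hp l (hsub hl)) (hw l (hsub hl)))]
end

section
/- From (ε,δ)-location privacy to (ε,δ,θ)-POI privacy (Theorem 4): Let L be a nonempty finite set (the possible locations at timestep t) and let L* ⊆ L be such that L \ L* is nonempty. Let p : L → ℝ be a nonnegative prior with ∑_{l∈L} p(l) = 1 and ∑_{l∈L*} p(l) = δ, where 0 < δ ≤ 1. Let ε ≥ 0 and let q : L → ℝ be a nonnegative posterior satisfying q(l) = 0 for l ∈ L \ L* and q(l) ≤ δ⁻¹·e^ε·p(l) for l ∈ L* (i.e. the mechanism satisfies (ε,δ)-location privacy). Let w : L → ℝ be a nonnegative function (w(l) = Pr[l ↝ P] is the adversary's belief that the point of interest P was visited given that l is the user's location at timestep t). Then ∑_{l∈L} q(l)·w(l) ≤ δ⁻¹·e^ε·∑_{l∈L} p(l)·w(l) + θ, where θ = (δ − 1)·min_{l∈L\L*} w(l). That is, the posterior probability that P is the POI visited by the user between the two consecutive releases, given that the true location lies in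 L*, is at most δ⁻¹·e^ε times its prior probability plus θ. -/
/-- Theorem 4 (from (ε,δ)-location privacy to (ε,δ,θ)-POI privacy).
`L` is the nonempty finite set of possible locations, `Lstar ⊆ L` a
δ-obfuscation set with nonempty complement, `p` the prior (a probability mass
function on `L` with `∑ l ∈ Lstar, p l = δ`), `q` the posterior satisfying
(ε,δ)-location privacy, and `w l = Pr[l ↝ P]` the adversary's belief that the
point of interest `P` was visited given that `l` is the user's location.
Then the posterior probability that `P` is the visited POI, namely
`∑ l ∈ L, q l * w l`, is at most `δ⁻¹ * exp ε` times its prior probability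
`∑ l ∈ L, p l * w l` plus `θ = (δ - 1) * min_{l ∈ L \ Lstar} w l`. -/
theorem POI_privacy_from_location_privacy
    {α : Type*} [DecidableEq α] (L Lstar : Finset α) (hsub : Lstar ⊆ L)
    (hLne : L.Nonempty) (hdiff : (L \ Lstar).Nonempty)
    (p q w : α → ℝ) (δ ε : ℝ)
    (hδpos : 0 < δ) (hδle : δ ≤ 1) (hε : 0 ≤ ε)
    (hp : ∀ l ∈ L, 0 ≤ p l)
    (hpsum : ∑ l ∈ L, p l = 1)
    (hδ : ∑ l ∈ Lstar, p l = δ)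
    (hq : ∀ l ∈ L, 0 ≤ q l)
    (hqout : ∀ l ∈ L \ Lstar, q l = 0)
    (hqin : ∀ l ∈ Lstar, q l ≤ δ⁻¹ * Real.exp ε * p l)
    (hw : ∀ l ∈ L, 0 ≤ w l) :
    (∑ l ∈ L, q l * w l) ≤
      δ⁻¹ * Real.exp ε * (∑ l ∈ L, p l * w l) +
        (δ - 1) * (L \ Lstar).inf' hdiff w := by
  set m := (L \ Lstar).inf' hdiff w with hm
  have hc : 1 ≤ δ⁻¹ * Real.exp ε := by
    have h1 : (1:ℝ) ≤ δ⁻¹ := (one_le_inv₀ hδpos).2 hδle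
    have h2 : (1:ℝ) ≤ Real.exp ε := Real.one_le_exp hε
    nlinarith
  have hcnn : 0 ≤ δ⁻¹ * Real.exp ε := by linarith
  have hmnn : 0 ≤ m := by
    obtain ⟨l, hl⟩ := Finset.exists_mem_eq_inf' hdiff w
    rw [hm, hl.2]
    exact hw l (Finset.mem_sdiff.mp hl.1).1
  -- split sums
  have hsplitL : ∀ f : α → ℝ, ∑ l ∈ L, f l = ∑ l ∈ Lstar, f l + ∑ l ∈ L \ Lstar, f l := by
    intro f
    rw [add_comm, Finset.sum_sdiff hsub]
  have hLHS : ∑ l ∈ L, q l * w l = ∑ l ∈ Lstar, q l * w l := by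
    rw [hsplitL]
    have : ∑ l ∈ L \ Lstar, q l * w l = 0 :=
      Finset.sum_eq_zero fun l hl => by rw [hqout l hl, zero_mul]
    linarith
  have h1 : ∑ l ∈ Lstar, q l * w l ≤ δ⁻¹ * Real.exp ε * ∑ l ∈ Lstar, p l * w l := by
    rw [Finset.mul_sum]
    apply Finset.sum_le_sum
    intro l hl
    have hwl : 0 ≤ w l := hw l (hsub hl)
    have := hqin l hl
    nlinarith
  have h2 : m * (1 - δ) ≤ ∑ l ∈ L \ Lstar, p l * w l := by
    have hps : ∑ l ∈ L \ Lstar, p l = 1 - δ := by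
      have := hsplitL p
      rw [hpsum, hδ] at this
      linarith
    calc m * (1 - δ) = ∑ l ∈ L \ Lstar, m * p l := by
          rw [← Finset.mul_sum, hps]
      _ ≤ ∑ l ∈ L \ Lstar, p l * w l := by
          apply Finset.sum_le_sum
          intro l hl
          have hmem := Finset.mem_sdiff.mp hl
          have hwl : m ≤ w l := Finset.inf'_le w hl
          have hpl : 0 ≤ p l := hp l hmem.1
          nlinarith
  have h3 : (1 - δ) * m ≤ δ⁻¹ * Real.exp ε * ∑ l ∈ L \ Lstar, p l * w l := by
    have : (1 - δ) * m ≤ δ⁻¹ * Real.exp ε * (m * (1 - δ)) := by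
      nlinarith [mul_nonneg (sub_nonneg.2 hc) (mul_nonneg hmnn (by linarith : (0:ℝ) ≤ 1 - δ))]
    nlinarith
  rw [hLHS, hsplitL (fun l => p l * w l)]
  nlinarith
end
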